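/- arXiv:2602.02549 — 4 statements merged into one kernel-verified Lean document; each statement's English description precedes it below -/
import Mathlib

section
/- Let p_1,...,p_N ≥ 2 be pairwise coprime with product P, q_ℓ < p_ℓ the inverse of P/p_ℓ mod p_ℓ, and let W_ℓ be integers with |W_ℓ| ≤ ⌊p_ℓ/2⌋. Set C' := Σ_ℓ (P/p_ℓ)·q_ℓ·W_ℓ and Q := round(C'/P). Then |Q| ≤ ρ + 1/2, where ρ := Σ_ℓ ⌊p_ℓ/2⌋; in particular |Q| ≤ ρ since Q is an integer and ρ ≥ 1 when some p_ℓ ≥ 2. -/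
theorem quotient_bound
    (N : ℕ) (p q : Fin N → ℕ) (W : Fin N → ℤ)
    (hp : ∀ ℓ, 2 ≤ p ℓ)
    (hcop : ∀ i j, i ≠ j → Nat.Coprime (p i) (p j))
    (P : ℕ) (hP : P = ∏ ℓ, p ℓ)
    (hqlt : ∀ ℓ, q ℓ < p ℓ)
    (hq : ∀ ℓ, ((P / p ℓ : ℕ) : ℤ) * (q ℓ : ℤ) ≡ 1 [ZMOD (p ℓ : ℤ)])
    (hW : ∀ ℓ, |W ℓ| ≤ ((p ℓ / 2 : ℕ) : ℤ))
    (ρ : ℕ) (hρ : ρ = ∑ ℓ, p ℓ / 2)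
    (C' : ℤ) (hC' : C' = ∑ ℓ, ((P / p ℓ : ℕ) : ℤ) * (q ℓ : ℤ) * W ℓ)
    (Q : ℤ) (hQ : |(C' : ℚ) / (P : ℚ) - (Q : ℚ)| ≤ 1 / 2) :
    |(Q : ℚ)| ≤ (ρ : ℚ) + 1 / 2 ∧ |Q| ≤ (ρ : ℤ) := by
  have hPpos : 0 < P := by
    rw [hP]
    exact Finset.prod_pos fun ℓ _ => lt_of_lt_of_le (by norm_num) (hp ℓ)
  have hC : |C'| ≤ (P : ℤ) * (ρ : ℤ) := by
    rw [hC', hρ]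
    calc |∑ ℓ, ((P / p ℓ : ℕ) : ℤ) * (q ℓ : ℤ) * W ℓ|
        ≤ ∑ ℓ, |((P / p ℓ : ℕ) : ℤ) * (q ℓ : ℤ) * W ℓ| :=
          Finset.abs_sum_le_sum_abs _ _
      _ ≤ ∑ ℓ, (P : ℤ) * ((p ℓ / 2 : ℕ) : ℤ) := by
          apply Finset.sum_le_sum
          intro ℓ _
          have hdvd : p ℓ ∣ P := hP ▸ Finset.dvd_prod_of_mem p (Finset.mem_univ ℓ)
          have h1 : (P / p ℓ) * q ℓ ≤ P := by
            calc (P / p ℓ) * q ℓ ≤ (P / p ℓ) * p ℓ :=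
                  Nat.mul_le_mul_left _ (le_of_lt (hqlt ℓ))
              _ = P := Nat.div_mul_cancel hdvd
          rw [abs_mul, abs_mul]
          have h2 : |((P / p ℓ : ℕ) : ℤ)| * |(q ℓ : ℤ)| ≤ (P : ℤ) := by
            rw [abs_of_nonneg (Int.natCast_nonneg _), abs_of_nonneg (Int.natCast_nonneg _)]
            exact_mod_cast h1
          exact mul_le_mul h2 (hW ℓ) (abs_nonneg _) (Int.natCast_nonneg _)
      _ = (P : ℤ) * ((∑ ℓ, p ℓ / 2 : ℕ) : ℤ) := by
          rw [← Finset.mul_sum]; push_cast; ring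
  have hPQ : (0 : ℚ) < (P : ℚ) := by exact_mod_cast hPpos
  have hCQ : |(C' : ℚ) / (P : ℚ)| ≤ (ρ : ℚ) := by
    rw [abs_div, abs_of_pos hPQ, div_le_iff₀ hPQ]
    have : |(C' : ℚ)| ≤ (P : ℚ) * (ρ : ℚ) := by exact_mod_cast hC
    linarith [this]
  have h1 : |(Q : ℚ)| ≤ (ρ : ℚ) + 1 / 2 := by
    calc |(Q : ℚ)| = |(C' : ℚ) / (P : ℚ) - ((C' : ℚ) / (P : ℚ) - (Q : ℚ))| := by ring_nf
      _ ≤ |(C' : ℚ) / (P : ℚ)| + |(C' : ℚ) / (P : ℚ) - (Q : ℚ)| := abs_sub _ _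
      _ ≤ (ρ : ℚ) + 1 / 2 := add_le_add hCQ hQ
  refine ⟨h1, ?_⟩
  have h2 : (|Q| : ℚ) < (ρ : ℚ) + 1 := by
    push_cast
    calc |(Q : ℚ)| ≤ (ρ : ℚ) + 1 / 2 := h1
      _ < (ρ : ℚ) + 1 := by norm_num
  have h3 : |Q| < (ρ : ℤ) + 1 := by exact_mod_cast h2
  omega
end

section
/- Let A ∈ ℝ^{m×k}, B ∈ ℝ^{k×n}, μ ∈ ℤ^m, ν ∈ ℤ^n, A' := trunc(diag(2^μ)A), B' := trunc(B diag(2^ν)). Suppose there exist positive reals s_i := 2^{−μ_i} ≤ t·2^{α'_i} and r_j := 2^{−ν_j} ≤ t·2^{β'_j} for some t > 0 and reals α'_i, β'_j. Then entrywise |AB − diag(2^{−μ})·A'B'·diag(2^{−ν})| ≤ t·|A|v(2^{β'})^T + t·2^{α'}v^T|B| + k·t²·2^{α'}(2^{β'})^T, where v is the all-ones vector in ℝ^k. -/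
noncomputable def trunc (x : ℝ) : ℤ := if 0 ≤ x then ⌊x⌋ else ⌈x⌉

lemma trunc_err (x : ℝ) : |(trunc x : ℝ) - x| ≤ 1 := by
  unfold trunc
  split_ifs with h
  · rw [abs_le]
    constructor
    · linarith [Int.sub_one_lt_floor x, Int.floor_le x]
    · linarith [Int.floor_le x]
  · rw [abs_le]
    constructor
    · linarith [Int.le_ceil x]
    · linarith [Int.ceil_lt_add_one x]

open Matrix in
theorem truncation_error_bound
    (m k n : ℕ) (A : Matrix (Fin m) (Fin k) ℝ) (B : Matrix (Fin k) (Fin n) ℝ)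
    (μ : Fin m → ℤ) (ν : Fin n → ℤ)
    (A' : Matrix (Fin m) (Fin k) ℝ) (hA' : ∀ i h, A' i h = (trunc ((2 : ℝ) ^ (μ i) * A i h) : ℝ))
    (B' : Matrix (Fin k) (Fin n) ℝ) (hB' : ∀ h j, B' h j = (trunc (B h j * (2 : ℝ) ^ (ν j)) : ℝ))
    (t : ℝ) (ht : 0 < t) (α' : Fin m → ℝ) (β' : Fin n → ℝ)
    (hμ : ∀ i, (2 : ℝ) ^ (-μ i) ≤ t * (2 : ℝ) ^ (α' i))
    (hν : ∀ j, (2 : ℝ) ^ (-ν j) ≤ t * (2 : ℝ) ^ (β' j)) :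
    ∀ i j, |(A * B) i j - (2 : ℝ) ^ (-μ i) * ((A' * B') i j) * (2 : ℝ) ^ (-ν j)| ≤
      t * (∑ h, |A i h|) * (2 : ℝ) ^ (β' j)
        + t * (2 : ℝ) ^ (α' i) * (∑ h, |B h j|)
        + (k : ℝ) * t ^ 2 * (2 : ℝ) ^ (α' i) * (2 : ℝ) ^ (β' j) := by
  intro i j
  set s : ℝ := (2 : ℝ) ^ (-μ i) with hsdef
  set r : ℝ := (2 : ℝ) ^ (-ν j) with hrdef
  have hs0 : 0 < s := zpow_pos (by norm_num) _
  have hr0 : 0 < r := zpow_pos (by norm_num) _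
  have hα0 : (0:ℝ) < (2:ℝ) ^ (α' i) := Real.rpow_pos_of_pos (by norm_num) _
  have hβ0 : (0:ℝ) < (2:ℝ) ^ (β' j) := Real.rpow_pos_of_pos (by norm_num) _
  have hs1 : s * (2 : ℝ) ^ (μ i) = 1 := by
    rw [hsdef, ← zpow_add₀ (by norm_num : (2:ℝ) ≠ 0)]; simp
  have hr1 : (2 : ℝ) ^ (ν j) * r = 1 := by
    rw [hrdef, ← zpow_add₀ (by norm_num : (2:ℝ) ≠ 0)]; simp
  have hst : s ≤ t * (2:ℝ) ^ (α' i) := hμ i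
  have hrt : r ≤ t * (2:ℝ) ^ (β' j) := hν j
  simp only [Matrix.mul_apply]
  have hsum : (∑ h, A i h * B h j) - s * (∑ h, A' i h * B' h j) * r
      = ∑ h, (A i h * B h j - s * (A' i h * B' h j) * r) := by
    rw [Finset.sum_sub_distrib, Finset.mul_sum, Finset.sum_mul]
  rw [hsum]
  have hterm : ∀ h : Fin k, |A i h * B h j - s * (A' i h * B' h j) * r| ≤
      t * |A i h| * (2:ℝ) ^ (β' j) + t * (2:ℝ) ^ (α' i) * |B h j|
        + t ^ 2 * (2:ℝ) ^ (α' i) * (2:ℝ) ^ (β' j) := by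
    intro h
    set e : ℝ := A' i h - (2:ℝ) ^ (μ i) * A i h with hedef
    set f : ℝ := B' h j - B h j * (2:ℝ) ^ (ν j) with hfdef
    have he : |e| ≤ 1 := by rw [hedef, hA' i h]; exact trunc_err _
    have hf : |f| ≤ 1 := by rw [hfdef, hB' h j]; exact trunc_err _
    have key : A i h * B h j - s * (A' i h * B' h j) * r
        = -(A i h * f * r + s * e * B h j + s * e * f * r) := by
      have hA2 : A' i h = (2:ℝ) ^ (μ i) * A i h + e := by rw [hedef]; ring
      have hB2 : B' h j = B h j * (2:ℝ) ^ (ν j) + f := by rw [hfdef]; ring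
      rw [hA2, hB2]
      linear_combination (-(A i h * B h j) * ((2:ℝ) ^ (ν j) * r) - A i h * f * r) * hs1
        + (-(A i h * B h j) - s * e * B h j) * hr1
    rw [key, abs_neg]
    have h1 : |A i h * f * r| ≤ |A i h| * (t * (2:ℝ) ^ (β' j)) := by
      rw [abs_mul, abs_mul, abs_of_pos hr0]
      calc |A i h| * |f| * r ≤ |A i h| * 1 * r := by
            gcongr
        _ = |A i h| * r := by ring
        _ ≤ |A i h| * (t * (2:ℝ) ^ (β' j)) := by gcongr
    have h2 : |s * e * B h j| ≤ t * (2:ℝ) ^ (α' i) * |B h j| := by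
      rw [abs_mul, abs_mul, abs_of_pos hs0]
      calc s * |e| * |B h j| ≤ s * 1 * |B h j| := by gcongr
        _ = s * |B h j| := by ring
        _ ≤ t * (2:ℝ) ^ (α' i) * |B h j| := by gcongr
    have h3 : |s * e * f * r| ≤ t ^ 2 * (2:ℝ) ^ (α' i) * (2:ℝ) ^ (β' j) := by
      rw [abs_mul, abs_mul, abs_mul, abs_of_pos hs0, abs_of_pos hr0]
      calc s * |e| * |f| * r ≤ s * 1 * 1 * r := by gcongr
        _ = s * r := by ring
        _ ≤ (t * (2:ℝ) ^ (α' i)) * (t * (2:ℝ) ^ (β' j)) := by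
            exact mul_le_mul hst hrt hr0.le (by positivity)
        _ = t ^ 2 * (2:ℝ) ^ (α' i) * (2:ℝ) ^ (β' j) := by ring
    calc |A i h * f * r + s * e * B h j + s * e * f * r|
        ≤ |A i h * f * r| + |s * e * B h j| + |s * e * f * r| := abs_add_three _ _ _
      _ ≤ |A i h| * (t * (2:ℝ) ^ (β' j)) + t * (2:ℝ) ^ (α' i) * |B h j|
            + t ^ 2 * (2:ℝ) ^ (α' i) * (2:ℝ) ^ (β' j) := by gcongr
      _ = t * |A i h| * (2:ℝ) ^ (β' j) + t * (2:ℝ) ^ (α' i) * |B h j|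
            + t ^ 2 * (2:ℝ) ^ (α' i) * (2:ℝ) ^ (β' j) := by ring
  calc |∑ h, (A i h * B h j - s * (A' i h * B' h j) * r)|
      ≤ ∑ h, |A i h * B h j - s * (A' i h * B' h j) * r| :=
        Finset.abs_sum_le_sum_abs _ _
    _ ≤ ∑ h, (t * |A i h| * (2:ℝ) ^ (β' j) + t * (2:ℝ) ^ (α' i) * |B h j|
          + t ^ 2 * (2:ℝ) ^ (α' i) * (2:ℝ) ^ (β' j)) :=
        Finset.sum_le_sum (fun h _ => hterm h)
    _ = t * (∑ h, |A i h|) * (2:ℝ) ^ (β' j) + t * (2:ℝ) ^ (α' i) * (∑ h, |B h j|)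
          + (k : ℝ) * t ^ 2 * (2:ℝ) ^ (α' i) * (2:ℝ) ^ (β' j) := by
        rw [Finset.sum_add_distrib, Finset.sum_add_distrib, Finset.sum_const,
          Finset.card_univ, Fintype.card_fin, ← Finset.sum_mul, ← Finset.mul_sum,
          ← Finset.mul_sum]
        simp only [nsmul_eq_mul]
        ring
end

section
/- Let r > 0 and let s be a real number with 0 ≤ s < 2·ufp(r) and s ∈ 2^c·u·2·ufp(r)·ℤ for some integer c ≥ 0 and u = 2^{−53}. Let W be an integer with |W| ≤ K where K·2·ufp(r) is bounded by the largest floating-point number. Then s·W is an element of 2^c·u·2·ufp(r)·ℤ, and if additionally |s·W| ≤ 2^{c+53}·u·2·ufp(r), then s·W is exactly representable as a double-precision floating-point number. -/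
noncomputable def ufp (x : ℝ) : ℝ := if x = 0 then 0 else (2 : ℝ) ^ (⌊Real.logb 2 |x|⌋)

/-- a real is exactly representable as a double-precision floating-point number
(53-bit significand, unbounded exponent). -/
def RepresentableDouble (a : ℝ) : Prop :=
  ∃ z e : ℤ, |z| ≤ 2 ^ 53 ∧ a = (z : ℝ) * (2 : ℝ) ^ e

theorem scaled_product_representable
    (r : ℝ) (hr : 0 < r) (u : ℝ) (hu : u = (2 : ℝ) ^ (-53 : ℤ))
    (c : ℕ) (s : ℝ)
    (hs0 : 0 ≤ s) (hs1 : s < 2 * ufp r)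
    (hs2 : ∃ z : ℤ, s = (z : ℝ) * ((2 : ℝ) ^ c * u * 2 * ufp r))
    (W : ℤ) (K : ℝ) (hW : |(W : ℝ)| ≤ K) :
    (∃ z : ℤ, s * (W : ℝ) = (z : ℝ) * ((2 : ℝ) ^ c * u * 2 * ufp r)) ∧
      (|s * (W : ℝ)| ≤ (2 : ℝ) ^ (c + 53) * u * 2 * ufp r →
        RepresentableDouble (s * (W : ℝ))) := by
  obtain ⟨z, hz⟩ := hs2
  have hrne : r ≠ 0 := ne_of_gt hr
  set e : ℤ := ⌊Real.logb 2 |r|⌋ with he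
  have hufp : ufp r = (2 : ℝ) ^ e := by simp [ufp, hrne]; rw [he, abs_of_pos hr]
  have hA : (2 : ℝ) ^ c * u * 2 * ufp r = (2 : ℝ) ^ ((c : ℤ) - 52 + e) := by
    rw [hufp, hu]
    rw [show ((c : ℤ) - 52 + e) = (c : ℤ) + (-53) + 1 + e by ring]
    rw [zpow_add₀ (by norm_num : (2:ℝ) ≠ 0), zpow_add₀ (by norm_num : (2:ℝ) ≠ 0),
      zpow_add₀ (by norm_num : (2:ℝ) ≠ 0)]
    simp [zpow_natCast]
  have hApos : (0 : ℝ) < (2 : ℝ) ^ c * u * 2 * ufp r := by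
    rw [hA]; positivity
  constructor
  · exact ⟨z * W, by push_cast; rw [hz]; ring⟩
  · intro hb
    refine ⟨z * W, (c : ℤ) - 52 + e, ?_, ?_⟩
    · have h1 : |(z : ℝ) * W| * ((2 : ℝ) ^ c * u * 2 * ufp r)
          ≤ (2 : ℝ) ^ 53 * ((2 : ℝ) ^ c * u * 2 * ufp r) := by
        have h2 : |s * (W : ℝ)| = |(z : ℝ) * W| * ((2 : ℝ) ^ c * u * 2 * ufp r) := by
          have hzz : s * (W : ℝ) = ((z : ℝ) * W) * ((2 : ℝ) ^ c * u * 2 * ufp r) := by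
            rw [hz]; ring
          rw [hzz, abs_mul, abs_of_pos hApos]
        have h3 : (2 : ℝ) ^ (c + 53) * u * 2 * ufp r
            = (2 : ℝ) ^ 53 * ((2 : ℝ) ^ c * u * 2 * ufp r) := by
          rw [pow_add]; ring
        rw [← h2, ← h3]; exact hb
      have h4 : |(z : ℝ) * W| ≤ (2 : ℝ) ^ 53 :=
        le_of_mul_le_mul_right h1 hApos
      exact_mod_cast h4
    · rw [hz, ← hA]; push_cast; ring
end

section
/- Let A ∈ ℝ^{m×k}, B ∈ ℝ^{k×n}, μ ∈ ℤ^m, ν ∈ ℤ^n, and suppose C'' is an m×n real matrix with |C'' − A'B'| ≤ R entrywise for some nonnegative matrix R, where A' := trunc(diag(2^μ)A), B' := trunc(B diag(2^ν)). Suppose further 2^{−μ_i}·2^{−ν_j} ≤ t²·2^{α'_i + β'_j} for all i,j with t > 0. Then entrywise |AB − diag(2^{−μ})·C''·diag(2^{−ν})| ≤ t|A|v(2^{β'})^T + t·2^{α'}v^T|B| + (kE + R) ∘ (t²·2^{α'}(2^{β'})^T), where v is the all-ones k-vector, E the all-ones m×n matrix, and ∘ the entrywise product. -/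
lemma trunc_abs_le (x : ℝ) : |(trunc x : ℝ)| ≤ |x| := by
  unfold trunc
  split
  · next h =>
    rw [abs_of_nonneg h, abs_of_nonneg]
    · exact Int.floor_le x
    · push_cast
      exact_mod_cast Int.floor_nonneg.mpr h
  · next h =>
    push_neg at h
    rw [abs_of_neg h, abs_of_nonpos]
    · push_cast
      linarith [Int.le_ceil x]
    · exact_mod_cast Int.ceil_le.mpr (by exact_mod_cast h.le)

open Matrix in
theorem total_error_bound
    (m k n : ℕ) (A : Matrix (Fin m) (Fin k) ℝ) (B : Matrix (Fin k) (Fin n) ℝ)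
    (μ : Fin m → ℤ) (ν : Fin n → ℤ)
    (A' : Matrix (Fin m) (Fin k) ℝ) (hA' : ∀ i h, A' i h = (trunc ((2 : ℝ) ^ (μ i) * A i h) : ℝ))
    (B' : Matrix (Fin k) (Fin n) ℝ) (hB' : ∀ h j, B' h j = (trunc (B h j * (2 : ℝ) ^ (ν j)) : ℝ))
    (C'' R : Matrix (Fin m) (Fin n) ℝ)
    (hR0 : ∀ i j, 0 ≤ R i j)
    (hC'' : ∀ i j, |C'' i j - (A' * B') i j| ≤ R i j)
    (t : ℝ) (ht : 0 < t) (α' : Fin m → ℝ) (β' : Fin n → ℝ)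
    (hμ : ∀ i, (2 : ℝ) ^ (-μ i) ≤ t * (2 : ℝ) ^ (α' i))
    (hν : ∀ j, (2 : ℝ) ^ (-ν j) ≤ t * (2 : ℝ) ^ (β' j))
    (hμν : ∀ i j, (2 : ℝ) ^ (-μ i) * (2 : ℝ) ^ (-ν j) ≤ t ^ 2 * (2 : ℝ) ^ (α' i + β' j)) :
    ∀ i j, |(A * B) i j - (2 : ℝ) ^ (-μ i) * C'' i j * (2 : ℝ) ^ (-ν j)| ≤
      t * (∑ h, |A i h|) * (2 : ℝ) ^ (β' j)
        + t * (2 : ℝ) ^ (α' i) * (∑ h, |B h j|)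
        + ((k : ℝ) + R i j) * (t ^ 2 * (2 : ℝ) ^ (α' i) * (2 : ℝ) ^ (β' j)) := by
  intro i j
  set a : ℝ := (2 : ℝ) ^ (-μ i) with ha_def
  set b : ℝ := (2 : ℝ) ^ (-ν j) with hb_def
  have ha : 0 < a := zpow_pos (by norm_num) _
  have hb : 0 < b := zpow_pos (by norm_num) _
  have hainv : a * (2 : ℝ) ^ (μ i) = 1 := by
    rw [ha_def, ← zpow_add₀ (by norm_num : (2:ℝ) ≠ 0)]; simp
  have hbinv : b * (2 : ℝ) ^ (ν j) = 1 := by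
    rw [hb_def, ← zpow_add₀ (by norm_num : (2:ℝ) ≠ 0)]; simp
  set X : Fin k → ℝ := fun h => (2 : ℝ) ^ (μ i) * A i h with hX
  set Y : Fin k → ℝ := fun h => B h j * (2 : ℝ) ^ (ν j) with hY
  set S : ℝ := ∑ h, X h * Y h with hS
  have hAB : (A * B) i j = a * b * S := by
    rw [Matrix.mul_apply, hS, Finset.mul_sum]
    refine Finset.sum_congr rfl fun h _ => ?_
    have : a * b * (X h * Y h) = (a * (2:ℝ)^(μ i)) * (b * (2:ℝ)^(ν j)) * (A i h * B h j) := by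
      ring
    rw [this, hainv, hbinv]; ring
  have hA'B' : (A' * B') i j = ∑ h, (trunc (X h) : ℝ) * (trunc (Y h) : ℝ) := by
    rw [Matrix.mul_apply]
    exact Finset.sum_congr rfl fun h _ => by rw [hA', hB']
  -- per-term bound
  have hterm : ∀ h : Fin k, |X h * Y h - (trunc (X h) : ℝ) * (trunc (Y h) : ℝ)| ≤ |X h| + |Y h| := by
    intro h
    have e : X h * Y h - (trunc (X h) : ℝ) * (trunc (Y h) : ℝ)
        = X h * (Y h - (trunc (Y h) : ℝ)) + (X h - (trunc (X h) : ℝ)) * (trunc (Y h) : ℝ) := by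
      ring
    rw [e]
    have e1 : |Y h - (trunc (Y h) : ℝ)| ≤ 1 := by rw [abs_sub_comm]; exact trunc_err _
    have e2 : |X h - (trunc (X h) : ℝ)| ≤ 1 := by rw [abs_sub_comm]; exact trunc_err _
    have e3 : |(trunc (Y h) : ℝ)| ≤ |Y h| := trunc_abs_le _
    have b1 : |X h * (Y h - (trunc (Y h) : ℝ))| ≤ |X h| * 1 := by
      rw [abs_mul]; exact mul_le_mul_of_nonneg_left e1 (abs_nonneg _)
    have b2 : |(X h - (trunc (X h) : ℝ)) * (trunc (Y h) : ℝ)| ≤ 1 * |Y h| := by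
      rw [abs_mul]; exact mul_le_mul e2 e3 (abs_nonneg _) zero_le_one
    calc |X h * (Y h - (trunc (Y h) : ℝ)) + (X h - (trunc (X h) : ℝ)) * (trunc (Y h) : ℝ)|
        ≤ |X h * (Y h - (trunc (Y h) : ℝ))| + |(X h - (trunc (X h) : ℝ)) * (trunc (Y h) : ℝ)| :=
          abs_add_le _ _
      _ ≤ |X h| * 1 + 1 * |Y h| := add_le_add b1 b2
      _ = |X h| + |Y h| := by ring
  have hSbound : |S - (A' * B') i j| ≤ ∑ h, (|X h| + |Y h|) := by
    rw [hA'B', hS, ← Finset.sum_sub_distrib]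
    exact (Finset.abs_sum_le_sum_abs _ _).trans (Finset.sum_le_sum fun h _ => hterm h)
  have hmain : |S - C'' i j| ≤ (∑ h, (|X h| + |Y h|)) + R i j := by
    calc |S - C'' i j| ≤ |S - (A' * B') i j| + |C'' i j - (A' * B') i j| := by
          rw [abs_sub_comm (C'' i j)]
          exact abs_sub_le _ _ _
      _ ≤ (∑ h, (|X h| + |Y h|)) + R i j := add_le_add hSbound (hC'' i j)
  have hLHS : (A * B) i j - a * C'' i j * b = a * b * (S - C'' i j) := by
    rw [hAB]; ring
  rw [hLHS, abs_mul, abs_of_pos (mul_pos ha hb)]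
  have step1 : a * b * |S - C'' i j| ≤ a * b * ((∑ h, (|X h| + |Y h|)) + R i j) := by
    apply mul_le_mul_of_nonneg_left hmain (le_of_lt (mul_pos ha hb))
  refine step1.trans ?_
  have expand : a * b * ((∑ h, (|X h| + |Y h|)) + R i j)
      = b * (∑ h, |A i h|) + a * (∑ h, |B h j|) + (a * b) * R i j := by
    have h1 : ∀ h : Fin k, a * |X h| = |A i h| := by
      intro h
      rw [hX]
      simp only
      rw [abs_mul, abs_of_pos (zpow_pos (by norm_num : (0:ℝ) < 2) _), ← mul_assoc, hainv, one_mul]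
    have h2 : ∀ h : Fin k, b * |Y h| = |B h j| := by
      intro h
      rw [hY]
      simp only
      rw [abs_mul, abs_of_pos (zpow_pos (by norm_num : (0:ℝ) < 2) _), mul_comm |B h j|,
        ← mul_assoc, hbinv, one_mul]
    have hsum : a * b * (∑ h, (|X h| + |Y h|)) = b * (∑ h, |A i h|) + a * (∑ h, |B h j|) := by
      rw [Finset.mul_sum, Finset.mul_sum, Finset.mul_sum, ← Finset.sum_add_distrib]
      refine Finset.sum_congr rfl fun h _ => ?_
      rw [← h1 h, ← h2 h]; ring
    rw [mul_add, hsum]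
  rw [expand]
  have hsumA : 0 ≤ ∑ h, |A i h| := Finset.sum_nonneg fun h _ => abs_nonneg _
  have hsumB : 0 ≤ ∑ h, |B h j| := Finset.sum_nonneg fun h _ => abs_nonneg _
  have hk : (0:ℝ) ≤ (k : ℝ) * (t ^ 2 * (2 : ℝ) ^ (α' i) * (2 : ℝ) ^ (β' j)) := by
    have : (0:ℝ) < t ^ 2 * (2 : ℝ) ^ (α' i) * (2 : ℝ) ^ (β' j) :=
      mul_pos (mul_pos (pow_pos ht 2) (Real.rpow_pos_of_pos (by norm_num) _))
        (Real.rpow_pos_of_pos (by norm_num) _)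
    positivity
  have hb' : b ≤ t * (2 : ℝ) ^ (β' j) := hν j
  have ha' : a ≤ t * (2 : ℝ) ^ (α' i) := hμ i
  have hab : a * b ≤ t ^ 2 * (2 : ℝ) ^ (α' i) * (2 : ℝ) ^ (β' j) := by
    have := hμν i j
    rwa [Real.rpow_add (by norm_num : (0:ℝ) < 2), ← mul_assoc] at this
  have t1 : b * (∑ h, |A i h|) ≤ t * (∑ h, |A i h|) * (2 : ℝ) ^ (β' j) := by
    calc b * (∑ h, |A i h|) ≤ (t * (2 : ℝ) ^ (β' j)) * (∑ h, |A i h|) :=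
          mul_le_mul_of_nonneg_right hb' hsumA
      _ = t * (∑ h, |A i h|) * (2 : ℝ) ^ (β' j) := by ring
  have t2 : a * (∑ h, |B h j|) ≤ t * (2 : ℝ) ^ (α' i) * (∑ h, |B h j|) :=
    mul_le_mul_of_nonneg_right ha' hsumB
  have t3 : a * b * R i j ≤ (t ^ 2 * (2 : ℝ) ^ (α' i) * (2 : ℝ) ^ (β' j)) * R i j :=
    mul_le_mul_of_nonneg_right hab (hR0 i j)
  have : ((k : ℝ) + R i j) * (t ^ 2 * (2 : ℝ) ^ (α' i) * (2 : ℝ) ^ (β' j))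
      = (k : ℝ) * (t ^ 2 * (2 : ℝ) ^ (α' i) * (2 : ℝ) ^ (β' j))
        + (t ^ 2 * (2 : ℝ) ^ (α' i) * (2 : ℝ) ^ (β' j)) * R i j := by ring
  rw [this]
  linarith
end
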